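/- arXiv:2603.02491 — 6 statements merged into one kernel-verified Lean document; each statement's English description precedes it below -/
import Mathlib

section
/- For u_L ∈ [0,1], u_R = 1-u_L, q ∈ [0,1], margin m = |u_L - 1/2|, wrong-action mass w (= 1-q if u_L ≥ 1/2, else q), and normalized regret δ = 1 - (q·u_L + (1-q)·(1-u_L))/max{u_L, 1-u_L}: if m ≥ γ for some γ ∈ (0, 1/2], then w ≤ δ·(1+2γ)/(4γ). -/
/-!
The regret factors exactly as `δ = w · c(m)` with `c(m) = 4m/(1+2m)`: if `u ≥ 1/2` the best
action earns `u`, and playing the wrong one with mass `w` loses `w · (2u - 1) = w · 2m` out of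
`u = m + 1/2`. Since `c` is increasing and positive on `(0, ∞)`, `m ≥ γ` gives
`w · c(γ) ≤ w · c(m) = δ`.
-/

noncomputable def marginFactor (m : ℝ) : ℝ := 4 * m / (1 + 2 * m)

lemma marginFactor_pos {m : ℝ} (hm : 0 < m) : 0 < marginFactor m := by
  unfold marginFactor; positivity

lemma marginFactor_monotoneOn : MonotoneOn marginFactor (Set.Ioi (-1 / 2)) := by
  intro a ha b hb hab
  simp only [Set.mem_Ioi] at ha hb
  unfold marginFactor
  rw [div_le_div_iff₀ (by linarith) (by linarith)]
  nlinarith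

lemma one_sub_div_max_eq_mul_marginFactor (u q : ℝ) :
    1 - (q * u + (1 - q) * (1 - u)) / max u (1 - u) =
      (if (1 : ℝ) / 2 ≤ u then 1 - q else q) * marginFactor |u - 1 / 2| := by
  unfold marginFactor
  split_ifs with hu
  · rw [max_eq_left (by linarith), abs_of_nonneg (by linarith)]
    field_simp [show u ≠ 0 by linarith]
    ring
  · rw [max_eq_right (by linarith), abs_of_neg (by linarith), neg_sub,
      show 1 + 2 * (1 / 2 - u) = 2 * (1 - u) by ring]
    field_simp [show 1 - u ≠ 0 by linarith]
    ring

theorem stmt_2_general (uL q γ : ℝ)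
    (hq : q ∈ Set.Icc (0:ℝ) 1)
    (hγ : γ ∈ Set.Ioc (0:ℝ) (1/2))
    (m δ w : ℝ)
    (hm : m = |uL - 1/2|)
    (hδ : δ = 1 - (q * uL + (1 - q) * (1 - uL)) / max uL (1 - uL))
    (hw : w = if (1:ℝ)/2 ≤ uL then 1 - q else q)
    (hmγ : γ ≤ m) :
    w ≤ δ * (1 + 2 * γ) / (4 * γ) := by
  have hδw : δ = w * marginFactor m := by
    rw [hδ, hw, hm, one_sub_div_max_eq_mul_marginFactor]
  have hw0 : 0 ≤ w := by
    rw [hw]; split_ifs <;> linarith [hq.1, hq.2]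
  have hmono : marginFactor γ ≤ marginFactor m :=
    marginFactor_monotoneOn (by simp only [Set.mem_Ioi]; linarith [hγ.1])
      (by simp only [Set.mem_Ioi]; linarith [hγ.1]) hmγ
  rw [← div_div_eq_mul_div]
  change w ≤ δ / marginFactor γ
  rw [le_div_iff₀ (marginFactor_pos hγ.1), hδw]
  exact mul_le_mul_of_nonneg_left hmono hw0

/-- Betting-case regret bound: if the margin is at least γ then the wrong-action
mass is bounded by δ·(1+2γ)/(4γ). -/
theorem stmt_2 (uL q γ : ℝ)
    (huL : uL ∈ Set.Icc (0:ℝ) 1) (hq : q ∈ Set.Icc (0:ℝ) 1)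
    (hγ : γ ∈ Set.Ioc (0:ℝ) (1/2))
    (m δ w : ℝ)
    (hm : m = |uL - 1/2|)
    (hδ : δ = 1 - (q * uL + (1 - q) * (1 - uL)) / max uL (1 - uL))
    (hw : w = if (1:ℝ)/2 ≤ uL then 1 - q else q)
    (hmγ : γ ≤ m) :
    w ≤ δ * (1 + 2 * γ) / (4 * γ) :=
  stmt_2_general uL q γ hq hγ m δ w hm hδ hw hmγ
end

section
/- Let X ~ Binomial(n, p) with n ≥ 1 and p ∈ [0,1]. Let k_med = min{k : P(X ≤ k) ≥ 1/2} be the lower median. Then |k_med - np| ≤ 1. -/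
/-- CDF of the Binomial(n,p) distribution. -/
noncomputable def binomCdf (n : ℕ) (p : ℝ) (k : ℕ) : ℝ :=
  ∑ i ∈ Finset.range (k + 1), (n.choose i : ℝ) * p ^ i * (1 - p) ^ (n - i)

/-!
Write `F_{n,p}(k)` for the CDF. Its derivative in `p` is `-n B_{n-1,k}(p)` (a Bernstein
polynomial), so `1 - F_{n,p}(k) = n ∫₀ᵖ B_{n-1,k}` and `F_{n,p}(k)` is strictly decreasing
in `p`.
The heart of the matter is the integer-mean case `p = μ / m`, where `F(μ - 1) ≤ 1/2 ≤ F(μ)`.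
For `2μ ≤ m` the first inequality comes from pairing the terms `μ - 1 - j` and `μ + j`;
for `2μ ≥ m` from comparing the Beta density `t^(μ-1) (1-t)^(m-μ)` with its reflection about
`c = μ / m`, which gives `∫_c^1 ≤ ∫_0^c`. The second inequality is the first one for
`m - X`. Now if `k_med + 1 < np`, moving `p` down to `(k_med + 1) / n` shows `F(k_med) < 1/2`,
and if `np < k_med - 1`, moving `p` up to `(k_med - 1) / n` shows `F(k_med - 1) ≥ 1/2`.
-/

open Finset Polynomial Real

lemma binomCdf_eq_sum_eval_bernsteinPolynomial (n : ℕ) (p : ℝ) (k : ℕ) :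
    binomCdf n p k = ∑ ν ∈ range (k + 1), (bernsteinPolynomial ℝ n ν).eval p := by
  simp [binomCdf, bernsteinPolynomial]

lemma derivative_sum_bernsteinPolynomial {R : Type*} [CommRing R] (n k : ℕ) :
    derivative (∑ ν ∈ range (k + 1), bernsteinPolynomial R n ν) =
      -n * bernsteinPolynomial R (n - 1) k := by
  induction k with
  | zero => simp [bernsteinPolynomial.derivative_zero]
  | succ k ih =>
    rw [sum_range_succ, derivative_add, ih, bernsteinPolynomial.derivative_succ]
    ring

lemma binomCdf_zero (n k : ℕ) : binomCdf n 0 k = 1 := by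
  simp [binomCdf_eq_sum_eval_bernsteinPolynomial, bernsteinPolynomial.eval_at_0]

lemma binomCdf_self (n : ℕ) (p : ℝ) : binomCdf n p n = 1 := by
  simp [binomCdf_eq_sum_eval_bernsteinPolynomial, ← eval_finsetSum, bernsteinPolynomial.sum]

lemma binomCdf_one {n k : ℕ} (hk : k < n) : binomCdf n 1 k = 0 := by
  rw [binomCdf_eq_sum_eval_bernsteinPolynomial]
  refine sum_eq_zero fun ν hν => ?_
  rw [bernsteinPolynomial.eval_at_1, if_neg]
  have := mem_range.mp hν
  omega

lemma hasDerivAt_binomCdf (n k : ℕ) (p : ℝ) :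
    HasDerivAt (binomCdf n · k) (-n * (bernsteinPolynomial ℝ (n - 1) k).eval p) p := by
  simp_rw [binomCdf_eq_sum_eval_bernsteinPolynomial, ← eval_finsetSum]
  have := (∑ ν ∈ range (k + 1), bernsteinPolynomial ℝ n ν).hasDerivAt p
  rwa [derivative_sum_bernsteinPolynomial, eval_mul, eval_neg, eval_natCast] at this

lemma one_sub_binomCdf_eq_integral (n k : ℕ) (p : ℝ) :
    1 - binomCdf n p k = n * ∫ t in (0 : ℝ)..p, (bernsteinPolynomial ℝ (n - 1) k).eval t := by
  have := intervalIntegral.integral_eq_sub_of_hasDerivAt (fun t _ => hasDerivAt_binomCdf n k t)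
    ((Polynomial.continuous _).const_mul _ |>.intervalIntegrable 0 p)
  rw [intervalIntegral.integral_const_mul, binomCdf_zero] at this
  linarith

lemma eval_bernsteinPolynomial_pos {n ν : ℕ} (h : ν ≤ n) {x : ℝ} (hx : x ∈ Set.Ioo 0 1) :
    0 < (bernsteinPolynomial ℝ n ν).eval x := by
  have := hx.1; have := hx.2
  simp only [bernsteinPolynomial, eval_mul, eval_pow, eval_natCast, eval_sub, eval_one, eval_X]
  have : (0 : ℝ) < n.choose ν := by exact_mod_cast Nat.choose_pos h
  have : (0 : ℝ) < 1 - x := by linarith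
  positivity

lemma binomCdf_strictAntiOn {n k : ℕ} (hk : k < n) :
    StrictAntiOn (binomCdf n · k) (Set.Icc 0 1) := by
  refine strictAntiOn_of_deriv_neg (convex_Icc 0 1)
    (fun x _ => (hasDerivAt_binomCdf n k x).continuousAt.continuousWithinAt) fun x hx => ?_
  rw [interior_Icc] at hx
  rw [(hasDerivAt_binomCdf n k x).deriv, neg_mul, neg_lt_zero]
  have hn : (0 : ℝ) < n := by exact_mod_cast (show 0 < n by omega)
  exact mul_pos hn (eval_bernsteinPolynomial_pos (by omega) hx)

lemma binomCdf_add_sum_Ico_eq_one {n k : ℕ} (hk : k ≤ n) (p : ℝ) :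
    binomCdf n p k + ∑ ν ∈ Ico (k + 1) (n + 1), (bernsteinPolynomial ℝ n ν).eval p = 1 := by
  rw [binomCdf_eq_sum_eval_bernsteinPolynomial, sum_range_add_sum_Ico _ (by omega),
    ← binomCdf_eq_sum_eval_bernsteinPolynomial, binomCdf_self]

lemma binomCdf_one_sub {n k : ℕ} (hk : k < n) (p : ℝ) :
    binomCdf n (1 - p) (n - 1 - k) = 1 - binomCdf n p k := by
  have hflip : ∀ ν ≤ n, (bernsteinPolynomial ℝ n ν).eval (1 - p) =
      (bernsteinPolynomial ℝ n (n - ν)).eval p := fun ν hν => by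
    rw [← bernsteinPolynomial.flip ℝ n ν hν, eval_comp]; simp
  rw [← eq_sub_of_add_eq' (binomCdf_add_sum_Ico_eq_one hk.le p),
    binomCdf_eq_sum_eval_bernsteinPolynomial, show n - 1 - k + 1 = n - k by omega,
    ← Nat.Ico_zero_eq_range,
    sum_congr rfl fun ν hν => hflip ν (by have := (mem_Ico.mp hν).2; omega),
    sum_Ico_reflect (fun ν => (bernsteinPolynomial ℝ n ν).eval p) _ (by omega),
    show n + 1 - (n - k) = k + 1 by omega, Nat.sub_zero]

lemma deriv_log_reflect_nonneg {a b : ℕ} {c x : ℝ} (hc : (a + b + 1) * c = b + 1)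
    (hc2 : 1 / 2 ≤ c) (hx0 : 0 ≤ x) (hx : x < 1 - c) :
    0 ≤ b * (-1 / (c - x) - 1 / (c + x)) + a * (1 / (1 - c + x) - -1 / (1 - c - x)) := by
  have h1 : 0 < c - x := by linarith
  have h2 : 0 < c + x := by linarith
  have h3 : 0 < 1 - c + x := by linarith
  have h4 : 0 < 1 - c - x := by linarith
  have hnum : b * c * ((1 - c) ^ 2 - x ^ 2) ≤ a * (1 - c) * (c ^ 2 - x ^ 2) := by
    have hid : a * (1 - c) * (c ^ 2 - x ^ 2) - b * c * ((1 - c) ^ 2 - x ^ 2)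
        = (a + b + 1) * x ^ 2 * (2 * c - 1) + c * ((1 - c) ^ 2 - x ^ 2) := by
      linear_combination ((1 - c) * (c ^ 2 - x ^ 2) + c * ((1 - c) ^ 2 - x ^ 2)) * hc
    have : 0 ≤ 2 * c - 1 := by linarith
    have : 0 ≤ (1 - c) ^ 2 - x ^ 2 := by nlinarith
    have : 0 ≤ (a + b + 1 : ℝ) * x ^ 2 * (2 * c - 1) := by positivity
    nlinarith
  have hexpr : b * (-1 / (c - x) - 1 / (c + x)) + a * (1 / (1 - c + x) - -1 / (1 - c - x))
      = 2 * (a * (1 - c) * (c ^ 2 - x ^ 2) - b * c * ((1 - c) ^ 2 - x ^ 2))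
        / ((c - x) * (c + x) * ((1 - c + x) * (1 - c - x))) := by
    field_simp
    ring
  rw [hexpr]
  exact div_nonneg (by linarith) (by positivity)

lemma log_reflect_nonneg {a b : ℕ} {c s : ℝ} (hc : (a + b + 1) * c = b + 1) (hc2 : 1 / 2 ≤ c)
    (hs0 : 0 ≤ s) (hs : s < 1 - c) :
    0 ≤ b * (log (c - s) - log (c + s)) + a * (log (1 - c + s) - log (1 - c - s)) := by
  have hpos : ∀ x ∈ Set.Icc 0 s, 0 < c - x ∧ 0 < c + x ∧ 0 < 1 - c + x ∧ 0 < 1 - c - x :=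
    fun x hx => by obtain ⟨h0, h1⟩ := hx; refine ⟨?_, ?_, ?_, ?_⟩ <;> linarith
  have hderiv : ∀ x ∈ Set.Icc 0 s, HasDerivAt
      (fun x => b * (log (c - x) - log (c + x)) + a * (log (1 - c + x) - log (1 - c - x)))
      (b * (-1 / (c - x) - 1 / (c + x)) + a * (1 / (1 - c + x) - -1 / (1 - c - x))) x := by
    intro x hx
    obtain ⟨h1, h2, h3, h4⟩ := hpos x hx
    have l1 := ((hasDerivAt_id x).const_sub c).log h1.ne'
    have l2 := ((hasDerivAt_id x).const_add c).log h2.ne'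
    have l3 := ((hasDerivAt_id x).const_add (1 - c)).log h3.ne'
    have l4 := ((hasDerivAt_id x).const_sub (1 - c)).log h4.ne'
    simp only [id] at l1 l2 l3 l4
    exact ((l1.sub l2).const_mul _).add ((l3.sub l4).const_mul _)
  have hmono := monotoneOn_of_hasDerivWithinAt_nonneg (convex_Icc 0 s)
    (fun x hx => (hderiv x hx).continuousAt.continuousWithinAt)
    (fun x hx => (hderiv x (interior_subset hx)).hasDerivWithinAt)
    fun x hx => deriv_log_reflect_nonneg hc hc2 (interior_subset hx).1
      (by linarith [(interior_subset hx).2])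
  simpa using hmono (Set.left_mem_Icc.2 hs0) (Set.right_mem_Icc.2 hs0) hs0

lemma pow_mul_one_sub_pow_reflect_le {a b : ℕ} {c s : ℝ} (ha : 0 < a)
    (hc : (a + b + 1) * c = b + 1) (hc2 : 1 / 2 ≤ c) (hs0 : 0 ≤ s) (hs : s ≤ 1 - c) :
    (c + s) ^ b * (1 - (c + s)) ^ a ≤ (c - s) ^ b * (1 - (c - s)) ^ a := by
  rcases hs.lt_or_eq with hs | rfl
  · have h1 : 0 < c - s := by linarith
    have h2 : 0 < c + s := by linarith
    have h3 : 0 < 1 - c + s := by linarith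
    have h4 : 0 < 1 - c - s := by linarith
    rw [show 1 - (c + s) = 1 - c - s by ring, show 1 - (c - s) = 1 - c + s by ring,
      ← log_le_log_iff (by positivity) (by positivity), log_mul (by positivity) (by positivity),
      log_mul (by positivity) (by positivity), log_pow, log_pow, log_pow, log_pow]
    linarith [log_reflect_nonneg hc hc2 hs0 hs]
  · rw [show 1 - (c + (1 - c)) = 0 by ring, zero_pow ha.ne', mul_zero]
    have : 0 ≤ c - (1 - c) := by linarith
    have : 0 ≤ 1 - (c - (1 - c)) := by linarith
    positivity

lemma integral_le_two_mul_integral_of_reflect_le {f : ℝ → ℝ} {c : ℝ} (hf : Continuous f)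
    (hf0 : ∀ t ∈ Set.Icc 0 c, 0 ≤ f t) (hc2 : 1 / 2 ≤ c) (hc1 : c ≤ 1)
    (hrefl : ∀ s ∈ Set.Icc 0 (1 - c), f (c + s) ≤ f (c - s)) :
    ∫ t in (0 : ℝ)..1, f t ≤ 2 * ∫ t in (0 : ℝ)..c, f t := by
  have hint : ∀ u v : ℝ, IntervalIntegrable f MeasureTheory.volume u v :=
    fun u v => hf.intervalIntegrable u v
  have hright : ∫ t in c..1, f t ≤ ∫ t in (2 * c - 1)..c, f t := by
    have : ∫ s in (0 : ℝ)..(1 - c), f (c + s) ≤ ∫ s in (0 : ℝ)..(1 - c), f (c - s) :=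
      intervalIntegral.integral_mono_on (by linarith)
        ((by fun_prop : Continuous fun s => f (c + s)).intervalIntegrable _ _)
        ((by fun_prop : Continuous fun s => f (c - s)).intervalIntegrable _ _) hrefl
    rw [intervalIntegral.integral_comp_add_left f c, intervalIntegral.integral_comp_sub_left f c]
      at this
    convert this using 2 <;> ring
  have hleft : 0 ≤ ∫ t in (0 : ℝ)..(2 * c - 1), f t :=
    intervalIntegral.integral_nonneg (by linarith) fun t ht => hf0 t ⟨ht.1, by linarith [ht.2]⟩
  rw [← intervalIntegral.integral_add_adjacent_intervals (hint 0 c) (hint c 1),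
    ← intervalIntegral.integral_add_adjacent_intervals (hint 0 (2 * c - 1)) (hint _ c)]
  linarith

lemma binomCdf_le_half_of_le_succ {a b : ℕ} (ha : 0 < a) (hab : a ≤ b + 1) :
    binomCdf (a + b + 1) ((b + 1) / (a + b + 1)) b ≤ 1 / 2 := by
  set c : ℝ := (b + 1) / (a + b + 1)
  have hm : (0 : ℝ) < a + b + 1 := by positivity
  have hc : (a + b + 1) * c = b + 1 := mul_div_cancel₀ _ hm.ne'
  have hc2 : 1 / 2 ≤ c := by
    have : (a : ℝ) ≤ b + 1 := by exact_mod_cast hab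
    rw [le_div_iff₀ hm]; linarith
  have hc1 : c ≤ 1 := div_le_one_of_le₀ (by linarith) hm.le
  set B := bernsteinPolynomial ℝ (a + b) b
  have hB : ∀ t, B.eval t = (a + b).choose b * (t ^ b * (1 - t) ^ a) := fun t => by
    simp [B, bernsteinPolynomial, mul_assoc]
  have hrep : ∀ p, 1 - binomCdf (a + b + 1) p b = (a + b + 1) * ∫ t in (0 : ℝ)..p, B.eval t :=
    fun p => by simpa using one_sub_binomCdf_eq_integral (a + b + 1) b p
  have hhalf : ∫ t in (0 : ℝ)..1, B.eval t ≤ 2 * ∫ t in (0 : ℝ)..c, B.eval t := by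
    refine integral_le_two_mul_integral_of_reflect_le (Polynomial.continuous _)
      (fun t ht => ?_) hc2 hc1 fun s hs => ?_
    · have : 0 ≤ 1 - t := by linarith [ht.2]
      rw [hB]; have := ht.1; positivity
    · rw [hB, hB]
      exact mul_le_mul_of_nonneg_left
        (pow_mul_one_sub_pow_reflect_le ha hc hc2 hs.1 hs.2) (by positivity)
  have h1 := hrep 1
  rw [binomCdf_one (by omega), sub_zero] at h1
  have := mul_le_mul_of_nonneg_left hhalf hm.le
  linarith [hrep c]

lemma choose_mul_pow_le_choose_mul_pow {a b j : ℕ} (hab : b + 1 ≤ a) (hj : j ≤ b) :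
    (a + b + 1).choose (b - j) * a ^ (2 * j + 1)
      ≤ (a + b + 1).choose (b + 1 + j) * (b + 1) ^ (2 * j + 1) := by
  induction j with
  | zero =>
    have h := Nat.choose_succ_right_eq (a + b + 1) b
    rw [show a + b + 1 - b = a + 1 by omega] at h
    simp only [Nat.sub_zero, add_zero, mul_zero, zero_add, pow_one, h]
    exact Nat.mul_le_mul_left _ (Nat.le_succ a)
  | succ j ih =>
    set m := a + b + 1
    specialize ih (by omega)
    have hlow : m.choose (b - j) * (b - j) = m.choose (b - (j + 1)) * (a + j + 2) := by
      have h := Nat.choose_succ_right_eq m (b - (j + 1))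
      rwa [show b - (j + 1) + 1 = b - j by omega, show m - (b - (j + 1)) = a + j + 2 by omega] at h
    have hhigh : m.choose (b + 1 + (j + 1)) * (b + j + 2) = m.choose (b + 1 + j) * (a - j) := by
      rw [show b + j + 2 = b + 1 + j + 1 by omega, ← show m - (b + 1 + j) = a - j by omega]
      exact Nat.choose_succ_right_eq m (b + 1 + j)
    -- as `(b - j)(b + j + 2) = (b + 1)² - (j + 1)²`, and likewise for `a`, this is
    -- `(j + 1)² ((b + 1)² - a²) ≤ (2a + 1)(b + 1)²`
    have hratio : (b - j) * (b + j + 2) * a ^ 2 ≤ (a - j) * (a + j + 2) * (b + 1) ^ 2 := by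
      zify [show j ≤ b by omega, show j ≤ a by omega]
      have hba : (b : ℤ) + 1 ≤ a := by exact_mod_cast hab
      nlinarith [sq_nonneg ((j : ℤ) + 1),
        mul_le_mul_of_nonneg_left hba (sq_nonneg ((j : ℤ) + 1))]
    refine Nat.le_of_mul_le_mul_left ?_ (show 0 < (a + j + 2) * (b + j + 2) by positivity)
    calc (a + j + 2) * (b + j + 2) * (m.choose (b - (j + 1)) * a ^ (2 * (j + 1) + 1))
        = (m.choose (b - (j + 1)) * (a + j + 2)) * (b + j + 2) * a ^ (2 * j + 3) := by ring
      _ = (m.choose (b - j) * a ^ (2 * j + 1)) * ((b - j) * (b + j + 2) * a ^ 2) := by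
          rw [← hlow]; ring
      _ ≤ (m.choose (b + 1 + j) * (b + 1) ^ (2 * j + 1))
            * ((a - j) * (a + j + 2) * (b + 1) ^ 2) := Nat.mul_le_mul ih hratio
      _ = (m.choose (b + 1 + (j + 1)) * (b + j + 2)) * (a + j + 2) * (b + 1) ^ (2 * j + 3) := by
          rw [hhigh]; ring
      _ = (a + j + 2) * (b + j + 2)
            * (m.choose (b + 1 + (j + 1)) * (b + 1) ^ (2 * (j + 1) + 1)) := by ring

lemma binomCdf_le_half_of_succ_le {a b : ℕ} (hab : b + 1 ≤ a) :
    binomCdf (a + b + 1) ((b + 1) / (a + b + 1)) b ≤ 1 / 2 := by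
  set m := a + b + 1
  set c : ℝ := (b + 1) / (a + b + 1)
  have hm : (0 : ℝ) < a + b + 1 := by positivity
  have h1c : 1 - c = a / (a + b + 1) := by simp only [c]; field_simp; ring
  set P : ℕ → ℝ := fun ν => (bernsteinPolynomial ℝ m ν).eval c
  have hP0 : ∀ ν, 0 ≤ P ν := fun ν => by
    simp only [P, bernsteinPolynomial, eval_mul, eval_pow, eval_natCast, eval_sub, eval_one,
      eval_X, h1c]
    positivity
  -- the terms `P (b - j)` and `P (b + 1 + j)` share the factor `c ^ (b - j) (1 - c) ^ (a - j)`
  have hpair : ∀ j ≤ b, P (b - j) ≤ P (b + 1 + j) := fun j hj => by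
    have hnat : (m.choose (b - j) * a ^ (2 * j + 1) : ℝ)
        ≤ m.choose (b + 1 + j) * (b + 1) ^ (2 * j + 1) := by
      exact_mod_cast choose_mul_pow_le_choose_mul_pow hab hj
    set R : ℝ := c ^ (b - j) * (a / (a + b + 1)) ^ (a - j) / (a + b + 1) ^ (2 * j + 1)
    have hR : 0 ≤ R := by positivity
    simp only [P, bernsteinPolynomial, eval_mul, eval_pow, eval_natCast, eval_sub, eval_one,
      eval_X, h1c]
    rw [show m - (b - j) = (a - j) + (2 * j + 1) by omega, show m - (b + 1 + j) = a - j by omega]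
    calc (m.choose (b - j) : ℝ) * c ^ (b - j) * (a / (a + b + 1)) ^ (a - j + (2 * j + 1))
        = (m.choose (b - j) * a ^ (2 * j + 1)) * R := by
          rw [pow_add, div_pow (a : ℝ) _ (2 * j + 1)]; ring
      _ ≤ (m.choose (b + 1 + j) * (b + 1) ^ (2 * j + 1)) * R :=
          mul_le_mul_of_nonneg_right hnat hR
      _ = m.choose (b + 1 + j) * c ^ (b + 1 + j) * (a / (a + b + 1)) ^ (a - j) := by
          rw [show b + 1 + j = (b - j) + (2 * j + 1) by omega, pow_add c, div_pow _ _ (2 * j + 1)]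
          ring
  have hsplit : binomCdf m c b + ∑ ν ∈ Ico (b + 1) (m + 1), P ν = 1 :=
    binomCdf_add_sum_Ico_eq_one (by omega) c
  have hlow_le_high : binomCdf m c b ≤ ∑ ν ∈ Ico (b + 1) (m + 1), P ν := calc
    binomCdf m c b = ∑ j ∈ range (b + 1), P (b - j) := by
        rw [binomCdf_eq_sum_eval_bernsteinPolynomial, ← sum_range_reflect]; rfl
    _ ≤ ∑ j ∈ range (b + 1), P (b + 1 + j) := sum_le_sum fun j hj => hpair j (by
        have := mem_range.mp hj; omega)
    _ = ∑ ν ∈ Ico (b + 1) (2 * b + 2), P ν := by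
        rw [sum_Ico_eq_sum_range, show 2 * b + 2 - (b + 1) = b + 1 by omega]
    _ ≤ ∑ ν ∈ Ico (b + 1) (m + 1), P ν :=
        sum_le_sum_of_subset_of_nonneg (Ico_subset_Ico_right (by omega)) fun ν _ _ => hP0 ν
  linarith

lemma binomCdf_pred_le_half {m μ : ℕ} (hμ : 0 < μ) (hμm : μ < m) :
    binomCdf m (μ / m) (μ - 1) ≤ 1 / 2 := by
  obtain ⟨b, rfl⟩ : ∃ b, μ = b + 1 := ⟨μ - 1, by omega⟩
  obtain ⟨a, rfl⟩ : ∃ a, m = a + b + 1 := ⟨m - b - 1, by omega⟩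
  push_cast
  rcases le_total a (b + 1) with hab | hab
  · exact binomCdf_le_half_of_le_succ (by omega) hab
  · exact binomCdf_le_half_of_succ_le hab

lemma half_le_binomCdf {m μ : ℕ} (hμm : μ < m) : 1 / 2 ≤ binomCdf m (μ / m) μ := by
  rcases Nat.eq_zero_or_pos μ with rfl | hμ
  · norm_num [binomCdf_zero]
  · have hm : (m : ℝ) ≠ 0 := by exact_mod_cast (show m ≠ 0 by omega)
    have hsymm := binomCdf_one_sub (n := m) (k := m - μ - 1) (by omega) ((m - μ : ℕ) / m)
    rw [show 1 - ((m - μ : ℕ) : ℝ) / m = μ / m by rw [Nat.cast_sub hμm.le]; field_simp; ring,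
      show m - 1 - (m - μ - 1) = μ by omega] at hsymm
    linarith [binomCdf_pred_le_half (m := m) (μ := m - μ) (by omega) (by omega)]

lemma natCast_mul_le_add_one_of_half_le_binomCdf {n k : ℕ} {p : ℝ} (hp : p ∈ Set.Icc 0 1)
    (hk : 1 / 2 ≤ binomCdf n p k) : n * p ≤ k + 1 := by
  by_contra! h
  have hnp : n * p ≤ n := by nlinarith [hp.2]
  have hk1 : k + 1 < n := by exact_mod_cast (show (k : ℝ) + 1 < n by linarith)
  have hn : (0 : ℝ) < n := by exact_mod_cast (show 0 < n by omega)
  have hc : ((k + 1 : ℕ) : ℝ) / n < p := by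
    rw [div_lt_iff₀ hn]; push_cast; linarith
  have hc_mem : ((k + 1 : ℕ) : ℝ) / n ∈ Set.Icc 0 1 :=
    ⟨by positivity, div_le_one_of_le₀ (by exact_mod_cast hk1.le) hn.le⟩
  have hlt : binomCdf n p k < binomCdf n ((k + 1 : ℕ) / n) k :=
    binomCdf_strictAntiOn (by omega) hc_mem hp hc
  have hle := binomCdf_pred_le_half (m := n) (μ := k + 1) (by omega) hk1
  rw [Nat.add_sub_cancel] at hle
  linarith

lemma lt_natCast_mul_of_binomCdf_lt_half {n k : ℕ} {p : ℝ} (hp : p ∈ Set.Icc 0 1)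
    (hkn : k < n) (hk : binomCdf n p k < 1 / 2) : k < n * p := by
  by_contra! h
  have hn : (0 : ℝ) < n := by exact_mod_cast (show 0 < n by omega)
  have hc : p ≤ (k : ℝ) / n := by rw [le_div_iff₀ hn]; linarith
  have hc_mem : (k : ℝ) / n ∈ Set.Icc 0 1 :=
    ⟨by positivity, div_le_one_of_le₀ (by exact_mod_cast hkn.le) hn.le⟩
  have hle : binomCdf n (k / n) k ≤ binomCdf n p k :=
    (binomCdf_strictAntiOn hkn).antitoneOn hp hc_mem hc
  linarith [half_le_binomCdf hkn]

theorem stmt_7_general (n : ℕ) (p : ℝ) (hp : p ∈ Set.Icc (0:ℝ) 1)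
    (kmed : ℕ) (hkmed : kmed = sInf {k : ℕ | 1/2 ≤ binomCdf n p k}) :
    |(kmed : ℝ) - n * p| ≤ 1 := by
  have hn_mem : n ∈ {k : ℕ | 1/2 ≤ binomCdf n p k} := by norm_num [binomCdf_self]
  have hk_mem : 1 / 2 ≤ binomCdf n p kmed := hkmed ▸ Nat.sInf_mem ⟨n, hn_mem⟩
  have hkn : kmed ≤ n := hkmed ▸ Nat.sInf_le hn_mem
  rw [abs_le]
  refine ⟨by linarith [natCast_mul_le_add_one_of_half_le_binomCdf hp hk_mem], ?_⟩
  rcases Nat.eq_zero_or_pos kmed with h0 | hpos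
  · rw [h0, Nat.cast_zero]; nlinarith [hp.1]
  have hpred : binomCdf n p (kmed - 1) < 1 / 2 :=
    not_le.mp (Nat.notMem_of_lt_sInf (s := {k : ℕ | 1/2 ≤ binomCdf n p k}) (by omega))
  have := lt_natCast_mul_of_binomCdf_lt_half hp (by omega) hpred
  rw [Nat.cast_sub hpos, Nat.cast_one] at this
  linarith

/-- The lower median of a Binomial(n,p) distribution is within 1 of the mean np. -/
theorem stmt_7 (n : ℕ) (p : ℝ) (hn : 1 ≤ n) (hp : p ∈ Set.Icc (0:ℝ) 1)
    (kmed : ℕ) (hkmed : kmed = sInf {k : ℕ | 1/2 ≤ binomCdf n p k}) :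
    |(kmed : ℝ) - n * p| ≤ 1 :=
  stmt_7_general n p hp kmed hkmed
end

section
/- Let p, m, γ ∈ [0,1] with m = |p - 1/2| ≥ γ > 0, and let q ∈ [0,1]. Define V = q·p + (1-q)·(1-p), V* = 1/2 + m, w = 1-q if p ≥ 1/2 and w = q otherwise, and δ = 1 - V/V*. Then δ = w·4m/(1+2m) ≥ w·4γ/(1+2γ). Consequently, for any probability space with random variables p, q measurable functions of an outcome, E[δ] ≥ c(γ)·E[w·1{m ≥ γ}] where c(γ) = 4γ/(1+2γ). -/
open MeasureTheory

/-- Pointwise regret identity for fair betting goals, and its expectation form: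
δ = w·4m/(1+2m) ≥ w·4γ/(1+2γ) whenever m ≥ γ, hence
E[δ] ≥ c(γ)·E[w·1{m ≥ γ}] with c(γ) = 4γ/(1+2γ). -/
theorem stmt_9 {Ω : Type*} [MeasurableSpace Ω] (P : Measure Ω) [IsProbabilityMeasure P]
    (γ : ℝ) (hγ : 0 < γ) (hγ' : γ ≤ 1)
    (p q : Ω → ℝ)
    (hp : ∀ ω, p ω ∈ Set.Icc (0:ℝ) 1) (hq : ∀ ω, q ω ∈ Set.Icc (0:ℝ) 1)
    (m V δ w : Ω → ℝ)
    (hm : ∀ ω, m ω = |p ω - 1/2|)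
    (hV : ∀ ω, V ω = q ω * p ω + (1 - q ω) * (1 - p ω))
    (hδ : ∀ ω, δ ω = 1 - V ω / (1/2 + m ω))
    (hw : ∀ ω, w ω = if (1:ℝ)/2 ≤ p ω then 1 - q ω else q ω)
    (hδInt : Integrable δ P)
    (hwInt : Integrable (fun ω => w ω * Set.indicator {ω' | γ ≤ m ω'} (fun _ => (1:ℝ)) ω) P) :
    (∀ ω, γ ≤ m ω →
      δ ω = w ω * (4 * m ω) / (1 + 2 * m ω) ∧
      w ω * (4 * γ) / (1 + 2 * γ) ≤ δ ω) ∧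
    (4 * γ / (1 + 2 * γ)) *
        ∫ ω, w ω * Set.indicator {ω' | γ ≤ m ω'} (fun _ => (1:ℝ)) ω ∂P
      ≤ ∫ ω, δ ω ∂P := by

  have key : ∀ ω, δ ω = w ω * (4 * m ω) / (1 + 2 * m ω) := by
    intro ω
    have hp0 := (hp ω).1
    have hp1 := (hp ω).2
    rw [hδ, hV, hw, hm]
    by_cases h : (1:ℝ)/2 ≤ p ω
    · rw [if_pos h, abs_of_nonneg (by linarith : (0:ℝ) ≤ p ω - 1/2)]
      have h1 : p ω ≠ 0 := by linarith
      have h2 : (1:ℝ)/2 + (p ω - 1/2) ≠ 0 := by linarith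
      have h3 : (1:ℝ) + 2*(p ω - 1/2) ≠ 0 := by
        intro hc; linarith
      field_simp
      ring
    · push_neg at h
      rw [if_neg (not_le.2 h), abs_of_neg (by linarith : p ω - 1/2 < 0)]
      have e1 : (1:ℝ)/2 + -(p ω - 1/2) = 1 - p ω := by ring
      have e2 : (1:ℝ) + 2 * -(p ω - 1/2) = 2 * (1 - p ω) := by ring
      rw [e1, e2]
      have h1 : (1:ℝ) - p ω ≠ 0 := by intro hc; linarith
      field_simp
      ring
  have hw0 : ∀ ω, 0 ≤ w ω := by
    intro ω
    rw [hw]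
    rcases le_or_gt ((1:ℝ)/2) (p ω) with h | h
    · rw [if_pos h]; linarith [(hq ω).2]
    · rw [if_neg (not_le.2 h)]; exact (hq ω).1
  have hm0 : ∀ ω, 0 ≤ m ω := by intro ω; rw [hm]; exact abs_nonneg _
  have hδ0 : ∀ ω, 0 ≤ δ ω := by
    intro ω
    rw [key ω]
    apply div_nonneg
    · exact mul_nonneg (hw0 ω) (by linarith [hm0 ω])
    · linarith [hm0 ω]
  have hineq : ∀ ω, γ ≤ m ω → w ω * (4 * γ) / (1 + 2 * γ) ≤ δ ω := by
    intro ω hγm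
    rw [key ω]
    have d1 : (0:ℝ) < 1 + 2 * γ := by linarith
    have d2 : (0:ℝ) < 1 + 2 * m ω := by linarith [hm0 ω]
    rw [div_le_div_iff₀ d1 d2]
    nlinarith [mul_nonneg (hw0 ω) (sub_nonneg.2 hγm)]
  refine ⟨fun ω hγm => ⟨key ω, hineq ω hγm⟩, ?_⟩
  rw [← MeasureTheory.integral_const_mul]
  refine integral_mono (hwInt.const_mul _) hδInt ?_
  intro ω
  by_cases h : γ ≤ m ω
  · have : Set.indicator {ω' | γ ≤ m ω'} (fun _ => (1:ℝ)) ω = 1 := by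
      simp only [Set.indicator_apply, Set.mem_setOf_eq, if_pos h]
    simp only [this, mul_one]
    calc 4 * γ / (1 + 2 * γ) * w ω = w ω * (4 * γ) / (1 + 2 * γ) := by ring
    _ ≤ δ ω := hineq ω h
  · have : Set.indicator {ω' | γ ≤ m ω'} (fun _ => (1:ℝ)) ω = 0 := by
      simp only [Set.indicator_apply, Set.mem_setOf_eq, if_neg h]
    simp only [this, mul_zero]
    exact hδ0 ω
end

section
/- Let p ∈ [0,1], K ≥ 1 an integer, λ_k = (k - 1/2)/K for k = 1,...,K, and q_1,...,q_K ∈ [0,1]. Define r_k = (1-q_k)(p - λ_k) if λ_k ≤ p and r_k = q_k(λ_k - p) otherwise, R = (1/K)·Σ r_k, and p̂ = (1/K)·Σ q_k. Then R ≥ (p̂ - p)²/2 - 1/(8K²). -/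
open Finset

/-!
Since `r_k = (p - λ_k)₊ + (λ_k - p) q_k`, the regret `R` is the midpoint Riemann sum of
`t ↦ (p - t)₊` plus `(1/K) ∑ λ_k q_k - p p̂`. The Riemann sum is at least `p²/2 - 1/(8K²)`:
keeping only the nodes below the integer `m` nearest to `K p` costs `(K p - m)² / (2K²) ≤ 1/(8K²)`.
For bets `q_k ∈ [0,1]` one has `(∑ q_k)² ≤ ∑ (2k - 1) q_k`, because appending `q_{n+1}` raises
the square by `2 q_{n+1} ∑_{k ≤ n} q_k + q_{n+1}² ≤ (2n + 1) q_{n+1}`; hence `(1/K) ∑ λ_k q_k ≥ p̂²/2`,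
and completing the square finishes the proof.
-/

theorem sum_Icc_natCast_sub_half (m : ℕ) :
    ∑ k ∈ Icc 1 m, ((k : ℝ) - 1 / 2) = (m : ℝ) ^ 2 / 2 := by
  induction m with
  | zero => simp
  | succ m ih =>
    rw [sum_Icc_succ_top (by omega), ih]
    push_cast
    ring

theorem sq_sum_le_sum_two_mul_sub_one_mul {x : ℕ → ℝ} (hx : ∀ k, x k ∈ Set.Icc (0 : ℝ) 1)
    (n : ℕ) : (∑ k ∈ Icc 1 n, x k) ^ 2 ≤ ∑ k ∈ Icc 1 n, (2 * (k : ℝ) - 1) * x k := by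
  induction n with
  | zero => simp
  | succ n ih =>
    have hsum_le : ∑ k ∈ Icc 1 n, x k ≤ n := by
      simpa using sum_le_card_nsmul (Icc 1 n) x 1 fun k _ => (hx k).2
    obtain ⟨hx0, hx1⟩ := hx (n + 1)
    rw [sum_Icc_succ_top (by omega), sum_Icc_succ_top (by omega)]
    push_cast
    nlinarith [mul_le_mul_of_nonneg_right hsum_le hx0, mul_le_mul_of_nonneg_left hx1 hx0]

theorem sq_mean_div_two_le_mean_midpoint_mul {K : ℕ} {q : ℕ → ℝ}
    (hq : ∀ k, q k ∈ Set.Icc (0 : ℝ) 1) :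
    ((1 / K) * ∑ k ∈ Icc 1 K, q k) ^ 2 / 2
      ≤ (1 / K) * ∑ k ∈ Icc 1 K, ((k : ℝ) - 1 / 2) / K * q k := by
  have hscale : ∑ k ∈ Icc 1 K, ((k : ℝ) - 1 / 2) / K * q k
      = (1 / (2 * K)) * ∑ k ∈ Icc 1 K, (2 * (k : ℝ) - 1) * q k := by
    rw [mul_sum]
    exact sum_congr rfl fun k _ => by ring
  calc ((1 / K) * ∑ k ∈ Icc 1 K, q k) ^ 2 / 2
      = (1 / K) * (1 / (2 * K)) * (∑ k ∈ Icc 1 K, q k) ^ 2 := by ring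
    _ ≤ (1 / K) * (1 / (2 * K)) * ∑ k ∈ Icc 1 K, (2 * (k : ℝ) - 1) * q k := by
        gcongr
        exact sq_sum_le_sum_two_mul_sub_one_mul hq K
    _ = (1 / K) * ∑ k ∈ Icc 1 K, ((k : ℝ) - 1 / 2) / K * q k := by
        rw [hscale]
        ring

theorem sq_div_two_sub_le_mean_midpoint_posPart {K : ℕ} (hK : 1 ≤ K) {p : ℝ}
    (hp : p ∈ Set.Icc (0 : ℝ) 1) :
    p ^ 2 / 2 - 1 / (8 * K ^ 2)
      ≤ (1 / K) * ∑ k ∈ Icc 1 K,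
          if ((k : ℝ) - 1 / 2) / K ≤ p then p - ((k : ℝ) - 1 / 2) / K else 0 := by
  obtain ⟨hp0, hp1⟩ := hp
  have hK0 : (0 : ℝ) < K := by exact_mod_cast hK
  have hx : 0 ≤ K * p + 1 / 2 := by positivity
  set m := ⌊K * p + 1 / 2⌋₊
  have hm_le : (m : ℝ) ≤ K * p + 1 / 2 := Nat.floor_le hx
  have hm_gt : K * p + 1 / 2 < m + 1 := Nat.lt_floor_add_one _
  have hmK : m ≤ K := Nat.lt_succ_iff.mp <| (Nat.floor_lt hx).mpr (by push_cast; nlinarith)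
  have hterms : ∀ k ∈ Icc 1 m, ((k : ℝ) - 1 / 2) / K ≤ p := by
    intro k hk
    have : (k : ℝ) ≤ m := by exact_mod_cast (mem_Icc.mp hk).2
    rw [div_le_iff₀ hK0]
    linarith
  calc p ^ 2 / 2 - 1 / (8 * K ^ 2)
      ≤ (1 / K) * (m * p - (m : ℝ) ^ 2 / (2 * K)) := by
        have hround : (K * p - m) ^ 2 ≤ 1 / 4 := by nlinarith
        have hgap : (1 / K) * (m * p - (m : ℝ) ^ 2 / (2 * K)) - (p ^ 2 / 2 - 1 / (8 * K ^ 2))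
            = (1 / 4 - (K * p - m) ^ 2) / (2 * K ^ 2) := by
          field_simp
          ring
        have : 0 ≤ (1 / 4 - (K * p - m) ^ 2) / (2 * K ^ 2) :=
          div_nonneg (by linarith) (by positivity)
        linarith
    _ = (1 / K) * ∑ k ∈ Icc 1 m, (p - ((k : ℝ) - 1 / 2) / K) := by
        rw [sum_sub_distrib, ← sum_div, sum_Icc_natCast_sub_half]
        simp only [sum_const, Nat.card_Icc, Nat.add_sub_cancel, nsmul_eq_mul]
        ring
    _ = (1 / K) * ∑ k ∈ Icc 1 m,
          if ((k : ℝ) - 1 / 2) / K ≤ p then p - ((k : ℝ) - 1 / 2) / K else 0 := by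
        rw [sum_congr rfl fun k hk => if_pos (hterms k hk)]
    _ ≤ (1 / K) * ∑ k ∈ Icc 1 K,
          if ((k : ℝ) - 1 / 2) / K ≤ p then p - ((k : ℝ) - 1 / 2) / K else 0 := by
        gcongr
        intro k _ _
        split_ifs <;> linarith

/-- Threshold-betting regret lower bound: R ≥ (p̂ - p)²/2 - 1/(8K²). -/
theorem stmt_10 (K : ℕ) (hK : 1 ≤ K) (p : ℝ) (hp : p ∈ Set.Icc (0:ℝ) 1)
    (q : ℕ → ℝ) (hq : ∀ k, q k ∈ Set.Icc (0:ℝ) 1)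
    (lam r : ℕ → ℝ) (R phat : ℝ)
    (hlam : ∀ k, lam k = ((k : ℝ) - 1/2) / K)
    (hr : ∀ k, r k = if lam k ≤ p then (1 - q k) * (p - lam k) else q k * (lam k - p))
    (hR : R = (1 / K) * ∑ k ∈ Finset.Icc 1 K, r k)
    (hphat : phat = (1 / K) * ∑ k ∈ Finset.Icc 1 K, q k) :
    (phat - p)^2 / 2 - 1 / (8 * K^2) ≤ R := by
  have hr_split : ∀ k, r k = (if ((k : ℝ) - 1 / 2) / K ≤ p then p - ((k : ℝ) - 1 / 2) / K else 0)
      + ((k : ℝ) - 1 / 2) / K * q k - p * q k := by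
    intro k
    rw [hr k, hlam k]
    split_ifs <;> ring
  have hR_split : R = (1 / K) * (∑ k ∈ Icc 1 K,
        if ((k : ℝ) - 1 / 2) / K ≤ p then p - ((k : ℝ) - 1 / 2) / K else 0)
      + (1 / K) * ∑ k ∈ Icc 1 K, ((k : ℝ) - 1 / 2) / K * q k - p * phat := by
    rw [hR, hphat, sum_congr rfl fun k _ => hr_split k, sum_sub_distrib, sum_add_distrib,
      ← mul_sum]
    ring
  have h_posPart := sq_div_two_sub_le_mean_midpoint_posPart hK hp
  have h_bets := sq_mean_div_two_le_mean_midpoint_mul (K := K) hq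
  rw [← hphat] at h_bets
  rw [hR_split]
  linarith [show (phat - p) ^ 2 / 2 = phat ^ 2 / 2 - p * phat + p ^ 2 / 2 by ring]
end

section
/- Fix K ≥ 1 and λ_k = (k - 1/2)/K. For any q_1,...,q_K ∈ [0,1] with average p̂ = (1/K)Σ q_k, one has (1/K)·Σ_{k=1}^{K} λ_k q_k ≥ p̂²/2. -/
open Finset

lemma key_12 (q : ℕ → ℝ) (hq : ∀ k, q k ∈ Set.Icc (0:ℝ) 1) :
    ∀ n : ℕ, (∑ k ∈ Finset.Icc 1 n, q k)^2 / 2 ≤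
      ∑ k ∈ Finset.Icc 1 n, ((k : ℝ) - 1/2) * q k := by
  intro n
  induction n with
  | zero => simp
  | succ n ih =>
    have hS : (∑ k ∈ Finset.Icc 1 n, q k) ≤ n := by
      calc (∑ k ∈ Finset.Icc 1 n, q k) ≤ ∑ k ∈ Finset.Icc 1 n, (1:ℝ) :=
        Finset.sum_le_sum (fun k _ => (hq k).2)
      _ = n := by simp
    have hS0 : (0:ℝ) ≤ ∑ k ∈ Finset.Icc 1 n, q k :=
      Finset.sum_nonneg (fun k _ => (hq k).1)
    have h1 : (0:ℝ) ≤ q (n+1) := (hq (n+1)).1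
    have h2 : q (n+1) ≤ 1 := (hq (n+1)).2
    rw [Finset.sum_Icc_succ_top (by omega), Finset.sum_Icc_succ_top (by omega)]
    push_cast
    nlinarith [sq_nonneg (q (n+1))]

/-- Greedy lower bound: for increasing weights λ_k = (k-1/2)/K and q ∈ [0,1]^K
with average p̂, one has (1/K)·Σ λ_k q_k ≥ p̂²/2. -/
theorem stmt_12 (K : ℕ) (hK : 1 ≤ K)
    (q : ℕ → ℝ) (hq : ∀ k, q k ∈ Set.Icc (0:ℝ) 1)
    (lam : ℕ → ℝ) (hlam : ∀ k, lam k = ((k : ℝ) - 1/2) / K)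
    (phat : ℝ) (hphat : phat = (1 / K) * ∑ k ∈ Finset.Icc 1 K, q k) :
    phat^2 / 2 ≤ (1 / K) * ∑ k ∈ Finset.Icc 1 K, lam k * q k := by
  have hKpos : (0:ℝ) < K := by exact_mod_cast hK
  have key := key_12 q hq K
  have hsum : ∑ k ∈ Finset.Icc 1 K, lam k * q k
      = (1 / K) * ∑ k ∈ Finset.Icc 1 K, ((k : ℝ) - 1/2) * q k := by
    rw [Finset.mul_sum]
    refine Finset.sum_congr rfl fun k _ => ?_
    rw [hlam k]; ring
  rw [hphat, hsum]
  rw [mul_pow, div_pow]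
  set S := ∑ k ∈ Finset.Icc 1 K, q k
  calc 1^2 / K^2 * S^2 / 2 = (1/K) * ((1/K) * (S^2/2)) := by ring
    _ ≤ (1/K) * ((1/K) * ∑ k ∈ Finset.Icc 1 K, ((k : ℝ) - 1/2) * q k) := by
        gcongr
end

section
/- Let (Ω, P) be a probability space with measurable functions p, p' : Ω → [0,1] and q : Ω → [0,1], and fix γ ∈ (0,1/2]. Suppose on an event A we have p ≥ 1/2 + γ and p' ≤ 1/2 - γ. Define margins m = |p - 1/2|, m' = |p' - 1/2|, regrets δ = 1 - (q·p + (1-q)(1-p))/(1/2+m) and δ' = 1 - (q·p' + (1-q)(1-p'))/(1/2+m'). Then on A, (δ + δ')/2 ≥ c(γ)/2 where c(γ) = 4γ/(1+2γ); consequently E[(δ + δ')/2] ≥ P(A)·c(γ)/2. -/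
open MeasureTheory

/-!
Betting `q` on a question whose optimal bet is taken with probability `p ≥ 1/2` loses the
fraction `(1 - q) (2p - 1) / p` of the optimal success probability, and by the symmetry
`(q, p) ↦ (1 - q, 1 - p)` a question with `p ≤ 1/2` loses `q (1 - 2p) / (1 - p)`. A margin `γ`
bounds both factors `(2p - 1)/p` and `(1 - 2p)/(1 - p)` below by `c(γ) = 4γ/(1 + 2γ)`, so when
one shared bet faces opposite optimal bets the two losses add up to at least
`c(γ) ((1 - q) + q) = c(γ)`.
-/

/-- Regret of betting on the first outcome with probability `q` when it occurs with
probability `p`, relative to the optimal success probability `1/2 + |p - 1/2|`. -/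
noncomputable def regret (q p : ℝ) : ℝ :=
  1 - (q * p + (1 - q) * (1 - p)) / (1 / 2 + |p - 1 / 2|)

noncomputable def regretConst (γ : ℝ) : ℝ :=
  4 * γ / (1 + 2 * γ)

theorem regret_one_sub_one_sub (q p : ℝ) : regret (1 - q) (1 - p) = regret q p := by
  unfold regret
  rw [show 1 - p - 1 / 2 = -(p - 1 / 2) by ring, abs_neg]
  ring_nf

theorem regret_eq_of_half_le {p : ℝ} (q : ℝ) (hp : 1 / 2 ≤ p) :
    regret q p = (1 - q) * ((2 * p - 1) / p) := by
  have hp0 : p ≠ 0 := by positivity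
  rw [regret, abs_of_nonneg (by linarith)]
  field_simp
  ring

theorem regretConst_le_div {γ p : ℝ} (hγ : 0 ≤ γ) (hp : 1 / 2 + γ ≤ p) :
    regretConst γ ≤ (2 * p - 1) / p := by
  rw [regretConst, div_le_div_iff₀ (by positivity) (by linarith)]
  nlinarith

theorem regretConst_mul_le_regret_of_half_add_le {γ p q : ℝ} (hγ : 0 ≤ γ)
    (hp : 1 / 2 + γ ≤ p) (hq : q ≤ 1) : regretConst γ * (1 - q) ≤ regret q p := by
  rw [regret_eq_of_half_le q (by linarith), mul_comm]
  exact mul_le_mul_of_nonneg_left (regretConst_le_div hγ hp) (by linarith)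

theorem regretConst_mul_le_regret_of_le_half_sub {γ p q : ℝ} (hγ : 0 ≤ γ)
    (hp : p ≤ 1 / 2 - γ) (hq : 0 ≤ q) : regretConst γ * q ≤ regret q p := by
  rw [← regret_one_sub_one_sub]
  simpa using regretConst_mul_le_regret_of_half_add_le hγ (p := 1 - p) (q := 1 - q)
    (by linarith) (by linarith)

theorem regret_nonneg {q : ℝ} (p : ℝ) (hq : q ∈ Set.Icc (0 : ℝ) 1) : 0 ≤ regret q p := by
  have hc : regretConst 0 = 0 := by simp [regretConst]
  rcases le_total (1 / 2) p with hp | hp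
  · simpa [hc] using regretConst_mul_le_regret_of_half_add_le le_rfl (by simpa using hp) hq.2
  · simpa [hc] using regretConst_mul_le_regret_of_le_half_sub le_rfl (by simpa using hp) hq.1

theorem regretConst_le_regret_add_regret {γ p p' q : ℝ} (hγ : 0 ≤ γ)
    (hp : 1 / 2 + γ ≤ p) (hp' : p' ≤ 1 / 2 - γ) (hq : q ∈ Set.Icc (0 : ℝ) 1) :
    regretConst γ ≤ regret q p + regret q p' := by
  have h := regretConst_mul_le_regret_of_half_add_le hγ hp hq.2
  have h' := regretConst_mul_le_regret_of_le_half_sub hγ hp' hq.1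
  linarith

theorem measureReal_mul_le_integral_of_le_on {α : Type*} [MeasurableSpace α] {μ : Measure α}
    [IsFiniteMeasure μ] {f : α → ℝ} (hf_nonneg : ∀ x, 0 ≤ f x) (hf : Integrable f μ)
    {A : Set α} {c : ℝ} (hc : 0 ≤ c) (hA : ∀ x ∈ A, c ≤ f x) :
    μ.real A * c ≤ ∫ x, f x ∂μ :=
  calc μ.real A * c ≤ c * μ.real {x | c ≤ f x} := by
        rw [mul_comm]
        exact mul_le_mul_of_nonneg_left (measureReal_mono hA) hc
    _ ≤ ∫ x, f x ∂μ :=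
        mul_meas_ge_le_integral_of_nonneg (Filter.Eventually.of_forall hf_nonneg) hf c

theorem stmt_16_general {Ω : Type*} [MeasurableSpace Ω] (P : Measure Ω) [IsProbabilityMeasure P]
    (γ : ℝ) (hγ : 0 < γ)
    (p p' q : Ω → ℝ)
    (hq : ∀ ω, q ω ∈ Set.Icc (0:ℝ) 1)
    (A : Set Ω)
    (hpA : ∀ ω ∈ A, 1/2 + γ ≤ p ω) (hp'A : ∀ ω ∈ A, p' ω ≤ 1/2 - γ)
    (m m' δ δ' : Ω → ℝ)
    (hm : ∀ ω, m ω = |p ω - 1/2|) (hm' : ∀ ω, m' ω = |p' ω - 1/2|)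
    (hδ : ∀ ω, δ ω = 1 - (q ω * p ω + (1 - q ω) * (1 - p ω)) / (1/2 + m ω))
    (hδ' : ∀ ω, δ' ω = 1 - (q ω * p' ω + (1 - q ω) * (1 - p' ω)) / (1/2 + m' ω))
    (hInt : Integrable (fun ω => (δ ω + δ' ω) / 2) P) :
    (∀ ω ∈ A, (4 * γ / (1 + 2 * γ)) / 2 ≤ (δ ω + δ' ω) / 2) ∧
    (P A).toReal * ((4 * γ / (1 + 2 * γ)) / 2)
      ≤ ∫ ω, (δ ω + δ' ω) / 2 ∂P := by
  have hδr : ∀ ω, δ ω = regret (q ω) (p ω) := fun ω => by rw [hδ, hm, regret]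
  have hδr' : ∀ ω, δ' ω = regret (q ω) (p' ω) := fun ω => by rw [hδ', hm', regret]
  have hpair : ∀ ω ∈ A, regretConst γ / 2 ≤ (δ ω + δ' ω) / 2 := fun ω hω => by
    rw [hδr, hδr']
    linarith [regretConst_le_regret_add_regret hγ.le (hpA ω hω) (hp'A ω hω) (hq ω)]
  have hnonneg : ∀ ω, 0 ≤ (δ ω + δ' ω) / 2 := fun ω => by
    rw [hδr, hδr']
    linarith [regret_nonneg (p ω) (hq ω), regret_nonneg (p' ω) (hq ω)]
  have hc : 0 ≤ regretConst γ / 2 := by unfold regretConst; positivity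
  exact ⟨hpair, measureReal_mul_le_integral_of_le_on hnonneg hInt hc hpair⟩

/-- Memory-necessity core: if on an event A the (shared-bet) policy faces
p ≥ 1/2+γ and p' ≤ 1/2-γ, then the pair-averaged regret is at least c(γ)/2 on A,
hence in expectation at least P(A)·c(γ)/2. -/
theorem stmt_16 {Ω : Type*} [MeasurableSpace Ω] (P : Measure Ω) [IsProbabilityMeasure P]
    (γ : ℝ) (hγ : 0 < γ) (hγ' : γ ≤ 1/2)
    (p p' q : Ω → ℝ)
    (hp : ∀ ω, p ω ∈ Set.Icc (0:ℝ) 1) (hp' : ∀ ω, p' ω ∈ Set.Icc (0:ℝ) 1)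
    (hq : ∀ ω, q ω ∈ Set.Icc (0:ℝ) 1)
    (A : Set Ω) (hA : MeasurableSet A)
    (hpA : ∀ ω ∈ A, 1/2 + γ ≤ p ω) (hp'A : ∀ ω ∈ A, p' ω ≤ 1/2 - γ)
    (m m' δ δ' : Ω → ℝ)
    (hm : ∀ ω, m ω = |p ω - 1/2|) (hm' : ∀ ω, m' ω = |p' ω - 1/2|)
    (hδ : ∀ ω, δ ω = 1 - (q ω * p ω + (1 - q ω) * (1 - p ω)) / (1/2 + m ω))
    (hδ' : ∀ ω, δ' ω = 1 - (q ω * p' ω + (1 - q ω) * (1 - p' ω)) / (1/2 + m' ω))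
    (hInt : Integrable (fun ω => (δ ω + δ' ω) / 2) P) :
    (∀ ω ∈ A, (4 * γ / (1 + 2 * γ)) / 2 ≤ (δ ω + δ' ω) / 2) ∧
    (P A).toReal * ((4 * γ / (1 + 2 * γ)) / 2)
      ≤ ∫ ω, (δ ω + δ' ω) / 2 ∂P :=
  stmt_16_general P γ hγ p p' q hq A hpA hp'A m m' δ δ' hm hm' hδ hδ' hInt
end
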